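/- Let C be a smooth 1-hedgehog with support function p and α ∈ (0, π). Then the oriented area of the α-evolutoid satisfies Ã(E_α(C)) ≤ Ã(C)·cos²α, with equality if and only if C is a circle (i.e., p(θ) = a₀ + a₁ cos θ + b₁ sin θ). -/

import Mathlib

open Real

noncomputable def orientedArea1 (q : ℝ → ℝ) : ℝ :=
  (1 / 2) * ∫ θ in (0:ℝ)..(2 * Real.pi), (q θ ^ 2 - deriv q θ ^ 2)


noncomputable section
namespace Stmt6Aux
open MeasureTheory intervalIntegral

lemma tpp : (0:ℝ) < 2 * Real.pi := by positivity

/-- complex exponential e^{inx} -/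
def ee (n : ℤ) (x : ℝ) : ℂ := Complex.exp (Complex.I * n * x)

/-- Fourier coefficient over [0, 2π] -/
def fcoef (f : ℝ → ℂ) (n : ℤ) : ℂ :=
  (1 / (2 * Real.pi) : ℂ) * ∫ x in (0:ℝ)..2 * Real.pi, ee (-n) x * f x






/-- complex exponential e^{inx} -/

lemma hasDerivAt_ee (n : ℤ) (x : ℝ) : HasDerivAt (ee n) (Complex.I * n * ee n x) x := by
  have h1 : HasDerivAt (fun x : ℝ => (x : ℂ)) 1 x := Complex.ofRealCLM.hasDerivAt
  have h2 : HasDerivAt (fun x : ℝ => Complex.I * n * x) (Complex.I * n) x := by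
    simpa using h1.const_mul (Complex.I * n)
  have h3 := h2.cexp
  unfold ee
  exact h3.congr_deriv (by ring)

lemma continuous_ee (n : ℤ) : Continuous (ee n) := by
  unfold ee; fun_prop

lemma periodic_ee (n : ℤ) : Function.Periodic (ee n) (2 * Real.pi) := by
  intro x
  unfold ee
  have : Complex.I * n * ((x : ℝ) + 2 * Real.pi : ℝ) = Complex.I * n * x + n * (2 * Real.pi * Complex.I) := by
    push_cast; ring
  rw [this, Complex.exp_add, Complex.exp_int_mul_two_pi_mul_I, mul_one]

lemma ee_zero_eval (x : ℝ) : ee 0 x = 1 := by simp [ee]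

lemma ee_mul (m n : ℤ) (x : ℝ) : ee m x * ee n x = ee (m + n) x := by
  unfold ee; rw [← Complex.exp_add]; congr 1; push_cast; ring

lemma integral_ee (n : ℤ) :
    ∫ x in (0:ℝ)..2 * Real.pi, ee n x = if n = 0 then (2 * Real.pi : ℂ) else 0 := by
  rcases eq_or_ne n 0 with rfl | hn
  · simp [ee_zero_eval]
  · have hI : (Complex.I * n) ≠ 0 := by
      simp [Complex.I_ne_zero, Complex.ext_iff]
      exact_mod_cast hn
    have hd : ∀ x ∈ Set.uIcc (0:ℝ) (2 * Real.pi), HasDerivAt (fun x => (Complex.I * n)⁻¹ * ee n x) (ee n x) x := by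
      intro x _
      have := (hasDerivAt_ee n x).const_mul (Complex.I * n)⁻¹
      have e : (Complex.I * n)⁻¹ * (Complex.I * ↑n * ee n x) = ee n x := by
        field_simp
      rw [e] at this
      convert this using 2
    rw [integral_eq_sub_of_hasDerivAt hd ((continuous_ee n).intervalIntegrable _ _)]
    have : ee n (2 * Real.pi) = ee n 0 := by
      simpa using periodic_ee n 0
    rw [this]
    simp [hn]

-- assume layer 1 available; restate minimal defs to test layer 2 standalone

/-- our Fourier coefficient -/

lemma fcoef_sub (f g : ℝ → ℂ) (hf : Continuous f) (hg : Continuous g) (n : ℤ) :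
    fcoef (fun x => f x - g x) n = fcoef f n - fcoef g n := by
  unfold fcoef
  rw [← mul_sub, ← intervalIntegral.integral_sub
    (((continuous_ee (-n)).fun_mul hf).intervalIntegrable _ _)
    (((continuous_ee (-n)).fun_mul hg).intervalIntegrable _ _)]
  congr 1
  apply intervalIntegral.integral_congr
  intro x _
  ring

lemma fcoef_const_mul (f : ℝ → ℂ) (c : ℂ) (hf : Continuous f) (n : ℤ) :
    fcoef (fun x => c * f x) n = c * fcoef f n := by
  unfold fcoef
  have e : ∀ x, ee (-n) x * (c * f x) = c * (ee (-n) x * f x) := fun x => by ring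
  simp_rw [e, intervalIntegral.integral_const_mul]
  ring

lemma fcoef_ee (m n : ℤ) : fcoef (ee m) n = if m = n then 1 else 0 := by
  unfold fcoef
  simp_rw [ee_mul]
  rw [integral_ee]
  have hpi := Real.pi_ne_zero
  rcases eq_or_ne m n with rfl | hmn
  · simp only [neg_add_cancel, if_pos rfl, ↓reduceIte]
    have h2 : (2 * Real.pi : ℂ) ≠ 0 := by
      simpa using hpi
    field_simp
  · rw [if_neg (by omega), if_neg hmn, mul_zero]

lemma fcoef_deriv (f f' : ℝ → ℂ) (hd : ∀ x, HasDerivAt f (f' x) x) (hc : Continuous f')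
    (hper : Function.Periodic f (2 * Real.pi)) (n : ℤ) :
    fcoef f' n = Complex.I * n * fcoef f n := by
  have hfc : Continuous f := by
    rw [continuous_iff_continuousAt]; exact fun x => (hd x).continuousAt
  -- integrate d/dx (ee (-n) x * f x)
  have key : ∀ x ∈ Set.uIcc (0:ℝ) (2*Real.pi),
      HasDerivAt (fun x => ee (-n) x * f x)
        (Complex.I * (-n) * (ee (-n) x * f x) + ee (-n) x * f' x) x := by
    intro x _
    have := (hasDerivAt_ee (-n) x).fun_mul (hd x)
    refine this.congr_deriv ?_
    push_cast
    ring
  have hint : IntervalIntegrable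
      (fun x => Complex.I * (-n) * (ee (-n) x * f x) + ee (-n) x * f' x)
      volume 0 (2*Real.pi) := by
    apply Continuous.intervalIntegrable
    exact (continuous_const.mul ((continuous_ee (-n)).mul hfc)).add
      ((continuous_ee (-n)).mul hc)
  have h0 := integral_eq_sub_of_hasDerivAt key hint
  have hbd : ee (-n) (2*Real.pi) * f (2*Real.pi) - ee (-n) 0 * f 0 = 0 := by
    have h1 : ee (-n) (2*Real.pi) = ee (-n) 0 := by simpa using periodic_ee (-n) 0
    have h2 : f (2*Real.pi) = f 0 := by simpa using hper 0
    rw [h1, h2, sub_self]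
  rw [hbd] at h0
  have hsplit : (∫ x in (0:ℝ)..2*Real.pi, (Complex.I * (-n) * (ee (-n) x * f x) + ee (-n) x * f' x))
      = Complex.I * (-n) * (∫ x in (0:ℝ)..2*Real.pi, ee (-n) x * f x)
        + ∫ x in (0:ℝ)..2*Real.pi, ee (-n) x * f' x := by
    rw [intervalIntegral.integral_add
      ((continuous_const.fun_mul ((continuous_ee (-n)).fun_mul hfc)).intervalIntegrable _ _)
      (((continuous_ee (-n)).fun_mul hc).intervalIntegrable _ _),
      intervalIntegral.integral_const_mul]
  rw [hsplit] at h0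
  have : (∫ x in (0:ℝ)..2*Real.pi, ee (-n) x * f' x)
      = Complex.I * n * (∫ x in (0:ℝ)..2*Real.pi, ee (-n) x * f x) := by
    have := h0
    push_cast at this ⊢
    linear_combination this
  unfold fcoef
  rw [this]
  ring
lemma fcoef_add (f g : ℝ → ℂ) (hf : Continuous f) (hg : Continuous g) (n : ℤ) :
    fcoef (fun x => f x + g x) n = fcoef f n + fcoef g n := by
  unfold fcoef
  rw [← mul_add, ← intervalIntegral.integral_add
    (((continuous_ee (-n)).fun_mul hf).intervalIntegrable _ _)
    (((continuous_ee (-n)).fun_mul hg).intervalIntegrable _ _)]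
  congr 1
  apply intervalIntegral.integral_congr
  intro x _
  ring


instance : Fact ((0:ℝ) < 2 * Real.pi) := ⟨tpp⟩

lemma coe_add_zsmul (x c : ℝ) (k : ℤ) : ((x + k • c : ℝ) : AddCircle c) = ((x:ℝ) : AddCircle c) := by
  induction k using Int.induction_on with
  | zero => norm_num
  | succ k ih =>
      have : x + ((k:ℤ)+1) • c = (x + (k:ℤ) • c) + c := by simp only [zsmul_eq_mul]; push_cast; ring
      rw [this, AddCircle.coe_add_period, ih]
  | pred k ih =>
      have : x + (-(k:ℤ)-1) • c = (x + (-(k:ℤ)) • c) - c := by simp only [zsmul_eq_mul]; push_cast; ring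
      rw [this]
      have h2 : ((x + (-(k:ℤ)) • c - c : ℝ) : AddCircle c) = ((x + (-(k:ℤ)) • c - c + c : ℝ) : AddCircle c) := (AddCircle.coe_add_period c _).symm
      rw [h2]
      rw [show x + (-(k:ℤ)) • c - c + c = x + (-(k:ℤ)) • c by ring, ih]

lemma coe_sub_zsmul (x c : ℝ) (k : ℤ) : ((x - k • c : ℝ) : AddCircle c) = ((x:ℝ) : AddCircle c) := by
  rw [show x - k • c = x + (-k) • c by simp only [zsmul_eq_mul]; push_cast; ring, coe_add_zsmul]

lemma liftIco_coe (f : ℝ → ℂ) (hper : Function.Periodic f (2 * Real.pi)) (x : ℝ) :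
    AddCircle.liftIco (2 * Real.pi) 0 f ↑x = f x := by
  set y := toIcoMod tpp 0 x with hy
  have hmem : y ∈ Set.Ico (0:ℝ) (0 + 2 * Real.pi) := toIcoMod_mem_Ico tpp 0 x
  have hsub : x - toIcoDiv tpp 0 x • (2 * Real.pi) = y := rfl
  have hcoe : ((y : ℝ) : AddCircle (2 * Real.pi)) = (x : AddCircle (2 * Real.pi)) := by
    rw [← hsub, coe_sub_zsmul]
  have : AddCircle.liftIco (2 * Real.pi) 0 f ↑y = f y := AddCircle.liftIco_coe_apply hmem
  rw [hcoe] at this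
  rw [this, ← hsub]
  exact hper.sub_zsmul_eq _

lemma fourier_eq_ee (n : ℤ) (x : ℝ) :
    (fourier n (x : AddCircle (2 * Real.pi)) : ℂ) = ee n x := by
  rw [fourier_coe_apply]
  unfold ee
  congr 1
  have : (Real.pi : ℂ) ≠ 0 := by simpa using Real.pi_ne_zero
  field_simp
  push_cast
  ring

lemma parseval (f : ℝ → ℂ) (hc : Continuous f) (hper : Function.Periodic f (2 * Real.pi)) :
    Summable (fun n : ℤ => ‖fcoef f n‖ ^ 2) ∧
      ∑' n : ℤ, ‖fcoef f n‖ ^ 2 = (1 / (2 * Real.pi)) * ∫ x in (0:ℝ)..2 * Real.pi, ‖f x‖ ^ 2 := by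
  have hf0 : f 0 = f (0 + 2 * Real.pi) := by rw [zero_add, ← hper 0, zero_add]
  set F : C(AddCircle (2 * Real.pi), ℂ) :=
    ⟨AddCircle.liftIco (2 * Real.pi) 0 f, AddCircle.liftIco_continuous hf0 hc.continuousOn⟩ with hF
  have hFcoe : ∀ x : ℝ, F (x : AddCircle (2 * Real.pi)) = f x := fun x => liftIco_coe f hper x
  -- Fourier coefficients agree
  have hcoeff : ∀ n : ℤ, fourierCoeff (⇑F) n = fcoef f n := by
    intro n
    rw [fourierCoeff_eq_intervalIntegral (⇑F) n 0, zero_add]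
    unfold fcoef
    rw [Complex.real_smul]
    congr 1
    · push_cast; ring
    · apply intervalIntegral.integral_congr
      intro x _
      show (fourier (-n)) (x : AddCircle (2 * Real.pi)) • F (x : AddCircle (2 * Real.pi)) = ee (-n) x * f x
      rw [smul_eq_mul, hFcoe x, fourier_eq_ee]
  set L := ContinuousMap.toLp (E := ℂ) 2 AddCircle.haarAddCircle ℂ F with hL
  have hLae : (⇑(L) : AddCircle (2 * Real.pi) → ℂ) =ᵐ[AddCircle.haarAddCircle] ⇑F :=
    ContinuousMap.coeFn_toLp AddCircle.haarAddCircle F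
  have hcoeffL : ∀ n : ℤ, fourierCoeff (⇑L : AddCircle (2 * Real.pi) → ℂ) n = fcoef f n := by
    intro n
    rw [fourierCoeff_toLp]
    exact hcoeff n
  -- Parseval
  have hpars := tsum_sq_fourierCoeff L
  -- rewrite RHS
  have hRHS : ∫ t : AddCircle (2 * Real.pi), ‖(L : AddCircle (2 * Real.pi) → ℂ) t‖ ^ 2 ∂AddCircle.haarAddCircle
      = (1 / (2 * Real.pi)) * ∫ x in (0:ℝ)..2 * Real.pi, ‖f x‖ ^ 2 := by
    have h1 : ∫ t : AddCircle (2 * Real.pi), ‖(L : AddCircle (2 * Real.pi) → ℂ) t‖ ^ 2 ∂AddCircle.haarAddCircle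
        = ∫ t : AddCircle (2 * Real.pi), ‖F t‖ ^ 2 ∂AddCircle.haarAddCircle := by
      apply MeasureTheory.integral_congr_ae
      filter_upwards [hLae] with t ht
      rw [ht]
    have h2 : ∫ x in (0:ℝ)..(0 + 2 * Real.pi), ‖F (x : AddCircle (2 * Real.pi))‖ ^ 2
        = ∫ t : AddCircle (2 * Real.pi), ‖F t‖ ^ 2 :=
      AddCircle.intervalIntegral_preimage (2 * Real.pi) 0 (fun t => ‖F t‖ ^ 2)
    have h3 : (volume : Measure (AddCircle (2 * Real.pi)))
        = ENNReal.ofReal (2 * Real.pi) • AddCircle.haarAddCircle :=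
      AddCircle.volume_eq_smul_haarAddCircle
    have h4 : ∫ t : AddCircle (2 * Real.pi), ‖F t‖ ^ 2
        = (2 * Real.pi) * ∫ t : AddCircle (2 * Real.pi), ‖F t‖ ^ 2 ∂AddCircle.haarAddCircle := by
      rw [h3, MeasureTheory.integral_smul_measure, ENNReal.toReal_ofReal tpp.le, smul_eq_mul]
    rw [h1]
    have h5 : ∫ x in (0:ℝ)..(0 + 2 * Real.pi), ‖F (x : AddCircle (2 * Real.pi))‖ ^ 2
        = ∫ x in (0:ℝ)..2 * Real.pi, ‖f x‖ ^ 2 := by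
      rw [zero_add]
      apply intervalIntegral.integral_congr
      intro x _
      show ‖F (x : AddCircle (2 * Real.pi))‖ ^ 2 = ‖f x‖ ^ 2
      rw [hFcoe x]
    rw [← h5, h2, h4]
    field_simp
  constructor
  · have hmem : Memℓp (⇑(fourierBasis.repr L)) 2 := lp.memℓp (fourierBasis.repr L)
    have hsum : Summable fun n : ℤ => ‖(fourierBasis.repr L) n‖ ^ ((2:ENNReal).toReal) :=
      (memℓp_gen_iff (by norm_num)).mp hmem
    have : ∀ n : ℤ, ‖(fourierBasis.repr L) n‖ ^ ((2:ENNReal).toReal) = ‖fcoef f n‖ ^ 2 := by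
      intro n
      rw [fourierBasis_repr, hcoeffL n]
      norm_num
    rw [funext this] at hsum
    exact hsum
  · rw [← hRHS, ← hpars]
    congr 1
    funext n
    rw [hcoeffL n]

lemma periodic_of_deriv {g g' : ℝ → ℝ} (hd : ∀ x, HasDerivAt g (g' x) x)
    (hper : Function.Periodic g (2 * Real.pi)) : Function.Periodic g' (2 * Real.pi) := by
  intro x
  have h1 : HasDerivAt (fun y => g (y + 2 * Real.pi)) (g' (x + 2 * Real.pi)) x :=
    HasDerivAt.comp_add_const x (2 * Real.pi) (hd (x + 2 * Real.pi))
  have h2 : (fun y => g (y + 2 * Real.pi)) = g := funext fun y => hper y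
  rw [h2] at h1
  exact h1.unique (hd x)

lemma wirtinger (g g' : ℝ → ℝ) (hd : ∀ x, HasDerivAt g (g' x) x) (hc' : Continuous g')
    (hper : Function.Periodic g (2 * Real.pi))
    (hmean : ∫ x in (0:ℝ)..2 * Real.pi, g x = 0) :
    (∫ x in (0:ℝ)..2 * Real.pi, g x ^ 2) ≤ (∫ x in (0:ℝ)..2 * Real.pi, g' x ^ 2) ∧
    ((∫ x in (0:ℝ)..2 * Real.pi, g x ^ 2) = (∫ x in (0:ℝ)..2 * Real.pi, g' x ^ 2) ↔
      ∃ a b : ℝ, ∀ θ, g θ = a * Real.cos θ + b * Real.sin θ) := by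
  have hgc : Continuous g := by
    rw [continuous_iff_continuousAt]; exact fun x => (hd x).continuousAt
  set f : ℝ → ℂ := fun x => (g x : ℂ) with hf
  set f' : ℝ → ℂ := fun x => (g' x : ℂ) with hf'
  have hfc : Continuous f := Complex.continuous_ofReal.comp hgc
  have hf'c : Continuous f' := Complex.continuous_ofReal.comp hc'
  have hfper : Function.Periodic f (2 * Real.pi) := fun x => by simp [hf, hper x]
  have hg'per : Function.Periodic g' (2 * Real.pi) := periodic_of_deriv hd hper
  have hf'per : Function.Periodic f' (2 * Real.pi) := fun x => by simp [hf', hg'per x]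
  have hfd : ∀ x, HasDerivAt f (f' x) x := fun x => (hd x).ofReal_comp
  have hrel : ∀ n : ℤ, fcoef f' n = Complex.I * n * fcoef f n :=
    fcoef_deriv f f' hfd hf'c hfper
  have hc0 : fcoef f 0 = 0 := by
    unfold fcoef
    have : ∀ x, ee (-0) x * f x = f x := fun x => by rw [neg_zero, ee_zero_eval, one_mul]
    rw [intervalIntegral.integral_congr (fun x _ => this x)]
    rw [hf, intervalIntegral.integral_ofReal, hmean]
    simp
  have hP := parseval f hfc hfper
  have hP' := parseval f' hf'c hf'per
  have hnormf : (∫ x in (0:ℝ)..2 * Real.pi, ‖f x‖ ^ 2) = ∫ x in (0:ℝ)..2 * Real.pi, g x ^ 2 := by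
    apply intervalIntegral.integral_congr
    intro x _
    show ‖(g x : ℂ)‖ ^ 2 = g x ^ 2
    rw [Complex.norm_real, Real.norm_eq_abs, _root_.sq_abs]
  have hnormf' : (∫ x in (0:ℝ)..2 * Real.pi, ‖f' x‖ ^ 2) = ∫ x in (0:ℝ)..2 * Real.pi, g' x ^ 2 := by
    apply intervalIntegral.integral_congr
    intro x _
    show ‖(g' x : ℂ)‖ ^ 2 = g' x ^ 2
    rw [Complex.norm_real, Real.norm_eq_abs, _root_.sq_abs]
  -- the difference series
  set φ : ℤ → ℝ := fun n => ‖fcoef f' n‖ ^ 2 - ‖fcoef f n‖ ^ 2 with hφ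
  have hφval : ∀ n : ℤ, φ n = ((n:ℝ) ^ 2 - 1) * ‖fcoef f n‖ ^ 2 := by
    intro n
    rw [hφ]
    simp only
    rw [hrel n]
    have : ‖Complex.I * n * fcoef f n‖ = |(n:ℝ)| * ‖fcoef f n‖ := by
      rw [norm_mul, norm_mul, Complex.norm_I, one_mul, Complex.norm_intCast]
    rw [this, mul_pow, _root_.sq_abs]
    ring
  have hφnonneg : ∀ n : ℤ, 0 ≤ φ n := by
    intro n
    rcases eq_or_ne n 0 with rfl | hn
    · rw [hφval]; simp [hc0]
    · rw [hφval]
      apply mul_nonneg _ (sq_nonneg _)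
      have : (1:ℝ) ≤ (n:ℝ)^2 := by
        have : (1:ℤ) ≤ n^2 := by rcases lt_or_gt_of_ne hn with h|h <;> nlinarith
        exact_mod_cast this
      linarith
  have hφsummable : Summable φ := hP'.1.sub hP.1
  have hφsum : ∑' n, φ n =
      (1 / (2 * Real.pi)) * ((∫ x in (0:ℝ)..2 * Real.pi, g' x ^ 2) - ∫ x in (0:ℝ)..2 * Real.pi, g x ^ 2) := by
    rw [hφ, Summable.tsum_sub hP'.1 hP.1, hP'.2, hP.2, hnormf, hnormf']
    ring
  have hineq : (∫ x in (0:ℝ)..2 * Real.pi, g x ^ 2) ≤ ∫ x in (0:ℝ)..2 * Real.pi, g' x ^ 2 := by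
    have h1 : 0 ≤ ∑' n, φ n := tsum_nonneg hφnonneg
    rw [hφsum] at h1
    by_contra hcon
    push_neg at hcon
    have h2 : (0:ℝ) < 1/(2*Real.pi) := by positivity
    nlinarith [mul_pos h2 (sub_pos.mpr hcon)]
  refine ⟨hineq, ?_, ?_⟩
  · -- equality → trig
    intro heq
    have hsum0 : ∑' n, φ n = 0 := by rw [hφsum, heq]; ring
    have hφ0 : ∀ n, φ n = 0 := by
      intro n
      have h1 : φ n ≤ ∑' m, φ m := Summable.le_tsum hφsummable n (fun m _ => hφnonneg m)
      have h2 := hφnonneg n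
      rw [hsum0] at h1
      linarith
    have hcn : ∀ n : ℤ, n ≠ 0 → n ≠ 1 → n ≠ -1 → fcoef f n = 0 := by
      intro n h0 h1 hm1
      have := hφ0 n
      rw [hφval] at this
      have hn2 : (1:ℝ) < (n:ℝ)^2 := by
        have : (1:ℤ) < n^2 := by
          rcases lt_or_gt_of_ne h0 with h | h
          · nlinarith [Int.lt_iff_add_one_le.mp h, (by omega : n ≤ -2)]
          · nlinarith [(by omega : 2 ≤ n)]
        exact_mod_cast this
      have : ‖fcoef f n‖ ^ 2 = 0 := by
        rcases mul_eq_zero.mp this with h | h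
        · linarith
        · exact h
      simpa using norm_eq_zero.mp (pow_eq_zero_iff (by norm_num) |>.mp this)
    -- subtract the degree-one part
    set c1 := fcoef f 1 with hc1
    set cm1 := fcoef f (-1) with hcm1
    set s : ℝ → ℂ := fun x => c1 * ee 1 x + cm1 * ee (-1) x with hs
    have hsc : Continuous s := (continuous_const.mul (continuous_ee 1)).add (continuous_const.mul (continuous_ee (-1)))
    have hsper : Function.Periodic s (2 * Real.pi) := fun x => by
      simp only [hs, periodic_ee 1 x, periodic_ee (-1) x]
    set h : ℝ → ℂ := fun x => f x - s x with hh
    have hhc : Continuous h := hfc.sub hsc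
    have hhper : Function.Periodic h (2 * Real.pi) := fun x => by
      simp only [hh, hfper x, hsper x]
    have hfcs : ∀ n, fcoef s n = (if (1:ℤ) = n then c1 else 0) + (if (-1:ℤ) = n then cm1 else 0) := by
      intro n
      rw [hs]
      rw [fcoef_add _ _ (continuous_const.fun_mul (continuous_ee 1)) (continuous_const.fun_mul (continuous_ee (-1))),
        fcoef_const_mul _ _ (continuous_ee 1), fcoef_const_mul _ _ (continuous_ee (-1)),
        fcoef_ee, fcoef_ee]
      split_ifs <;> ring
    have hhcoef : ∀ n, fcoef h n = 0 := by
      intro n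
      rw [hh, fcoef_sub f s hfc hsc, hfcs]
      rcases eq_or_ne n 0 with rfl | h0
      · rw [hc0]; norm_num
      rcases eq_or_ne n 1 with rfl | h1
      · rw [← hc1]; norm_num
      rcases eq_or_ne n (-1) with rfl | hm1
      · rw [← hcm1]; norm_num
      · rw [hcn n h0 h1 hm1, if_neg (by omega), if_neg (by omega)]; norm_num
    have hPh := parseval h hhc hhper
    have hint0 : (∫ x in (0:ℝ)..2 * Real.pi, ‖h x‖ ^ 2) = 0 := by
      have h1 : ∑' n : ℤ, ‖fcoef h n‖ ^ 2 = 0 := by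
        simp [hhcoef]
      have h2 := hPh.2
      rw [h1] at h2
      have hne : (1 / (2 * Real.pi) : ℝ) ≠ 0 := by positivity
      rcases mul_eq_zero.mp h2.symm with hx | hx
      · exact absurd hx hne
      · exact hx
    -- h vanishes identically
    have hhzero : ∀ x, h x = 0 := by
      have hae : (fun x => ‖h x‖ ^ 2) =ᵐ[volume.restrict (Set.Ioc (0:ℝ) (2 * Real.pi))] 0 := by
        rw [← intervalIntegral.integral_eq_zero_iff_of_le_of_nonneg_ae tpp.le
          (Filter.Eventually.of_forall (fun x => sq_nonneg _))
          ((hhc.norm.pow 2).intervalIntegrable _ _)]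
        exact hint0
      have heqon : Set.EqOn (fun x => ‖h x‖ ^ 2) 0 (Set.Ioc (0:ℝ) (2 * Real.pi)) :=
        Measure.eqOn_Ioc_of_ae_eq volume hae (hhc.norm.pow 2).continuousOn continuousOn_const
      have hIoc : ∀ x ∈ Set.Ioc (0:ℝ) (2 * Real.pi), h x = 0 := by
        intro x hx
        have := heqon hx
        simp only [Pi.zero_apply] at this
        exact norm_eq_zero.mp (pow_eq_zero_iff (two_ne_zero) |>.mp this)
      intro x
      set y := toIocMod tpp 0 x with hy
      have hmem : y ∈ Set.Ioc (0:ℝ) (0 + 2 * Real.pi) := toIocMod_mem_Ioc tpp 0 x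
      rw [zero_add] at hmem
      have hxy : x - toIocDiv tpp 0 x • (2 * Real.pi) = y := rfl
      calc h x = h y := by rw [← hxy]; exact (hhper.sub_zsmul_eq _).symm
        _ = 0 := hIoc y hmem
    -- extract the coefficients
    refine ⟨c1.re + cm1.re, -c1.im + cm1.im, ?_⟩
    intro θ
    have hx := sub_eq_zero.mp (hhzero θ)
    have hre := congrArg Complex.re hx
    rw [hf] at hre
    simp only [Complex.ofReal_re] at hre
    rw [hre, hs]
    have he1 : ee 1 θ = (Real.cos θ : ℂ) + (Real.sin θ : ℂ) * Complex.I := by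
      unfold ee
      rw [show Complex.I * ((1:ℤ):ℂ) * θ = (θ:ℂ) * Complex.I by push_cast; ring, Complex.exp_mul_I,
        ← Complex.ofReal_cos, ← Complex.ofReal_sin]
    have hem1 : ee (-1) θ = (Real.cos θ : ℂ) - (Real.sin θ : ℂ) * Complex.I := by
      unfold ee
      rw [show Complex.I * ((-1:ℤ):ℂ) * θ = ((-θ : ℝ):ℂ) * Complex.I by push_cast; ring,
        Complex.exp_mul_I, ← Complex.ofReal_cos, ← Complex.ofReal_sin, Real.cos_neg, Real.sin_neg]
      push_cast
      ring
    simp only [he1, hem1]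
    simp only [Complex.add_re, Complex.mul_re, Complex.sub_re, Complex.sub_im, Complex.add_im,
      Complex.ofReal_re, Complex.ofReal_im, Complex.mul_im, Complex.I_re, Complex.I_im]
    ring
  · -- trig → equality
    rintro ⟨a, b, hab⟩
    have hg'eq : ∀ x, g' x = -a * Real.sin x + b * Real.cos x := by
      intro x
      have h1 : HasDerivAt (fun θ => a * Real.cos θ + b * Real.sin θ)
          (-a * Real.sin x + b * Real.cos x) x := by
        have hc := (Real.hasDerivAt_cos x).const_mul a
        have hs := (Real.hasDerivAt_sin x).const_mul b
        refine (hc.fun_add hs).congr_deriv ?_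
        ring
      have h2 : (fun θ => a * Real.cos θ + b * Real.sin θ) = g := funext fun θ => (hab θ).symm
      rw [h2] at h1
      exact (hd x).unique h1
    -- FTC with explicit antiderivative
    have key : (∫ x in (0:ℝ)..2 * Real.pi, (g' x ^ 2 - g x ^ 2)) = 0 := by
      have hH : ∀ x ∈ Set.uIcc (0:ℝ) (2 * Real.pi),
          HasDerivAt (fun θ => -(a^2 - b^2) * Real.sin (2*θ) / 2 + a*b*Real.cos (2*θ))
            (g' x ^ 2 - g x ^ 2) x := by
        intro x _
        have hsin : HasDerivAt (fun θ : ℝ => Real.sin (2*θ)) (2 * Real.cos (2*x)) x := by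
          simpa [Function.comp_def, mul_comm] using (Real.hasDerivAt_sin (2*x)).comp x ((hasDerivAt_id x).const_mul 2)
        have hcos : HasDerivAt (fun θ : ℝ => Real.cos (2*θ)) (-(2 * Real.sin (2*x))) x := by
          simpa [Function.comp_def, mul_comm] using (Real.hasDerivAt_cos (2*x)).comp x ((hasDerivAt_id x).const_mul 2)
        have := ((hsin.const_mul (-(a^2 - b^2))).div_const 2).fun_add (hcos.const_mul (a*b))
        refine this.congr_deriv ?_
        rw [hg'eq x, hab x]
        rw [Real.cos_two_mul' ,Real.sin_two_mul]
        ring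
      rw [integral_eq_sub_of_hasDerivAt hH
        (((hc'.pow 2).sub (hgc.pow 2)).intervalIntegrable _ _)]
      have hs4 : Real.sin (2*(2*Real.pi)) = 0 := by
        rw [show 2*(2*Real.pi) = (4:ℕ)*Real.pi by push_cast; ring, Real.sin_nat_mul_pi]
      have hc4 : Real.cos (2*(2*Real.pi)) = 1 := by
        rw [show 2*(2*Real.pi) = (2:ℕ)*(2*Real.pi) by push_cast; ring, Real.cos_nat_mul_two_pi]
      rw [hs4, hc4]
      norm_num
    have i1 : IntervalIntegrable (fun x => g' x ^ 2) volume 0 (2*Real.pi) :=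
      (hc'.pow 2).intervalIntegrable _ _
    have i2 : IntervalIntegrable (fun x => g x ^ 2) volume 0 (2*Real.pi) :=
      (hgc.pow 2).intervalIntegrable _ _
    have key2 := key
    rw [intervalIntegral.integral_sub i1 i2] at key2
    linarith [key2]
end Stmt6Aux
end

open Stmt6Aux MeasureTheory intervalIntegral in
theorem stmt6 (p : ℝ → ℝ) (hp : ContDiff ℝ (⊤ : ℕ∞) p)
    (hper : Function.Periodic p (2 * Real.pi))
    (α : ℝ) (hα : α ∈ Set.Ioo 0 Real.pi) :
    orientedArea1
        (fun θ => p (θ - α) * Real.cos α + deriv p (θ - α) * Real.sin α)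
      ≤ orientedArea1 p * Real.cos α ^ 2
    ∧ (orientedArea1
          (fun θ => p (θ - α) * Real.cos α + deriv p (θ - α) * Real.sin α)
        = orientedArea1 p * Real.cos α ^ 2
      ↔ ∃ a₀ a₁ b₁ : ℝ, ∀ θ,
          p θ = a₀ + a₁ * Real.cos θ + b₁ * Real.sin θ) := by
  obtain ⟨hα0, hαπ⟩ := hα
  have hsinα : 0 < Real.sin α := Real.sin_pos_of_pos_of_lt_pi hα0 hαπ
  have hpinf : ContDiff ℝ (⊤:ℕ∞) p := hp.of_le (by simp)
  have hp1 : Differentiable ℝ p := hpinf.differentiable (by simp)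
  have hdp : ContDiff ℝ (⊤:ℕ∞) (deriv p) := (contDiff_infty_iff_deriv.mp hpinf).2
  have hp2 : Differentiable ℝ (deriv p) := hdp.differentiable (by simp)
  have hd2p : ContDiff ℝ (⊤:ℕ∞) (deriv (deriv p)) := (contDiff_infty_iff_deriv.mp hdp).2
  have hpc : Continuous p := hp1.continuous
  have hdpc : Continuous (deriv p) := hp2.continuous
  have hd2pc : Continuous (deriv (deriv p)) := (hd2p.differentiable (by simp)).continuous
  have hper1 : Function.Periodic (deriv p) (2 * Real.pi) :=
    periodic_of_deriv (fun x => (hp1 x).hasDerivAt) hper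
  have hper2 : Function.Periodic (deriv (deriv p)) (2 * Real.pi) :=
    periodic_of_deriv (fun x => (hp2 x).hasDerivAt) hper1
  set q : ℝ → ℝ := fun θ => p θ * Real.cos α + deriv p θ * Real.sin α with hqdef
  have hqd : ∀ θ, HasDerivAt q (deriv p θ * Real.cos α + deriv (deriv p) θ * Real.sin α) θ :=
    fun θ => (((hp1 θ).hasDerivAt).mul_const _).add (((hp2 θ).hasDerivAt).mul_const _)
  have hqderiv : ∀ θ, deriv q θ = deriv p θ * Real.cos α + deriv (deriv p) θ * Real.sin α :=
    fun θ => (hqd θ).deriv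
  have hqc : Continuous q := (hpc.mul continuous_const).add (hdpc.mul continuous_const)
  have hqderivc : Continuous (deriv q) := by
    have : deriv q = fun θ => deriv p θ * Real.cos α + deriv (deriv p) θ * Real.sin α :=
      funext hqderiv
    rw [this]
    exact (hdpc.mul continuous_const).add (hd2pc.mul continuous_const)
  have hqper : Function.Periodic q (2 * Real.pi) := fun x => by
    simp only [hqdef, hper x, hper1 x]
  have hqderivper : Function.Periodic (deriv q) (2 * Real.pi) :=
    periodic_of_deriv (fun x => hqd x |>.congr_deriv (hqderiv x).symm) hqper
  -- identify the evolutoid with q ∘ (· - α)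
  have hE : (fun θ => p (θ - α) * Real.cos α + deriv p (θ - α) * Real.sin α)
      = (fun θ => q (θ - α)) := rfl
  -- compute its oriented area
  have hshift : orientedArea1 (fun θ => q (θ - α))
      = (1/2) * ∫ θ in (0:ℝ)..(2 * Real.pi), (q θ ^ 2 - deriv q θ ^ 2) := by
    unfold orientedArea1
    congr 1
    have hderivE : ∀ θ, deriv (fun θ => q (θ - α)) θ = deriv q (θ - α) :=
      fun θ => deriv_comp_sub_const q α θ
    have h1 : (∫ θ in (0:ℝ)..(2 * Real.pi), ((fun θ => q (θ - α)) θ ^ 2 - deriv (fun θ => q (θ - α)) θ ^ 2))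
        = ∫ θ in (0:ℝ)..(2 * Real.pi), (q (θ - α) ^ 2 - deriv q (θ - α) ^ 2) := by
      apply intervalIntegral.integral_congr
      intro θ _
      simp only [hderivE θ]
    rw [h1]
    have h2 : (∫ θ in (0:ℝ)..(2 * Real.pi), (q (θ - α) ^ 2 - deriv q (θ - α) ^ 2))
        = ∫ θ in (0:ℝ) - α..(2 * Real.pi) - α, (q θ ^ 2 - deriv q θ ^ 2) :=
      intervalIntegral.integral_comp_sub_right (fun θ => q θ ^ 2 - deriv q θ ^ 2) α
    rw [h2]
    have hQper : Function.Periodic (fun θ => q θ ^ 2 - deriv q θ ^ 2) (2 * Real.pi) := fun x => by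
      simp only [hqper x, hqderivper x]
    have h3 := hQper.intervalIntegral_add_eq ((0:ℝ) - α) 0
    rw [show (2 * Real.pi - α) = (0 - α) + 2 * Real.pi by ring, h3, zero_add]
  -- the cross term vanishes
  have hcross : (∫ θ in (0:ℝ)..(2 * Real.pi), (p θ * deriv p θ - deriv p θ * deriv (deriv p) θ)) = 0 := by
    have hH : ∀ θ ∈ Set.uIcc (0:ℝ) (2 * Real.pi),
        HasDerivAt (fun θ => (p θ ^ 2 - deriv p θ ^ 2) / 2)
          (p θ * deriv p θ - deriv p θ * deriv (deriv p) θ) θ := by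
      intro θ _
      have h1 : HasDerivAt (fun θ => p θ ^ 2) (2 * p θ * deriv p θ) θ := by
        simpa [mul_comm, mul_assoc] using ((hp1 θ).hasDerivAt.fun_pow 2)
      have h2 : HasDerivAt (fun θ => deriv p θ ^ 2) (2 * deriv p θ * deriv (deriv p) θ) θ := by
        simpa [mul_comm, mul_assoc] using ((hp2 θ).hasDerivAt.fun_pow 2)
      have := (h1.fun_sub h2).div_const 2
      refine this.congr_deriv ?_
      ring
    rw [integral_eq_sub_of_hasDerivAt hH
      (((hpc.mul hdpc).sub (hdpc.mul hd2pc)).intervalIntegrable _ _)]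
    have e1 : p (2 * Real.pi) = p 0 := by simpa using hper 0
    have e2 : deriv p (2 * Real.pi) = deriv p 0 := by simpa using hper1 0
    rw [e1, e2]
    ring
  -- main identity
  set A := ∫ θ in (0:ℝ)..(2 * Real.pi), deriv p θ ^ 2 with hA
  set B := ∫ θ in (0:ℝ)..(2 * Real.pi), deriv (deriv p) θ ^ 2 with hB
  have main_id : orientedArea1 (fun θ => q (θ - α))
      = orientedArea1 p * Real.cos α ^ 2 + Real.sin α ^ 2 * ((1/2) * (A - B)) := by
    rw [hshift]
    unfold orientedArea1
    have expand : ∀ θ, q θ ^ 2 - deriv q θ ^ 2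
        = Real.cos α ^ 2 * (p θ ^ 2 - deriv p θ ^ 2)
          + Real.sin α ^ 2 * (deriv p θ ^ 2 - deriv (deriv p) θ ^ 2)
          + (2 * Real.sin α * Real.cos α) * (p θ * deriv p θ - deriv p θ * deriv (deriv p) θ) := by
      intro θ
      rw [hqderiv θ, hqdef]
      ring
    rw [intervalIntegral.integral_congr (fun θ _ => expand θ)]
    have i1 : IntervalIntegrable (fun θ => Real.cos α ^ 2 * (p θ ^ 2 - deriv p θ ^ 2)) volume 0 (2*Real.pi) :=
      (continuous_const.mul ((hpc.pow 2).sub (hdpc.pow 2))).intervalIntegrable _ _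
    have i2 : IntervalIntegrable (fun θ => Real.sin α ^ 2 * (deriv p θ ^ 2 - deriv (deriv p) θ ^ 2)) volume 0 (2*Real.pi) :=
      (continuous_const.mul ((hdpc.pow 2).sub (hd2pc.pow 2))).intervalIntegrable _ _
    have i3 : IntervalIntegrable (fun θ => (2 * Real.sin α * Real.cos α) * (p θ * deriv p θ - deriv p θ * deriv (deriv p) θ)) volume 0 (2*Real.pi) :=
      (continuous_const.mul ((hpc.mul hdpc).sub (hdpc.mul hd2pc))).intervalIntegrable _ _
    rw [intervalIntegral.integral_add (i1.add i2) i3, intervalIntegral.integral_add i1 i2,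
      intervalIntegral.integral_const_mul, intervalIntegral.integral_const_mul,
      intervalIntegral.integral_const_mul, hcross,
      intervalIntegral.integral_sub ((hdpc.fun_pow 2).intervalIntegrable _ _) ((hd2pc.fun_pow 2).intervalIntegrable _ _)]
    ring
  -- Wirtinger for deriv p
  have hmean : (∫ x in (0:ℝ)..2 * Real.pi, deriv p x) = 0 := by
    rw [intervalIntegral.integral_deriv_eq_sub (fun x _ => hp1 x) (hdpc.intervalIntegrable _ _)]
    have e1 : p (2 * Real.pi) = p 0 := by simpa using hper 0
    rw [e1, sub_self]
  have hW := wirtinger (deriv p) (deriv (deriv p)) (fun x => (hp2 x).hasDerivAt) hd2pc hper1 hmean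
  have hAB : A ≤ B := hW.1
  rw [hE]
  constructor
  · rw [main_id]
    nlinarith [sq_nonneg (Real.sin α)]
  · rw [main_id]
    constructor
    · intro heq
      have hABeq : A = B := by
        have h1 : Real.sin α ^ 2 * ((1/2) * (A - B)) = 0 := by linarith
        have h2 : Real.sin α ^ 2 ≠ 0 := by positivity
        have := mul_eq_zero.mp h1
        rcases this with h | h
        · exact absurd h h2
        · linarith [mul_eq_zero.mp h]
      obtain ⟨a, b, hab⟩ := hW.2.mp hABeq
      refine ⟨p 0 + b, -b, a, ?_⟩
      intro θ
      have hFTC : (∫ x in (0:ℝ)..θ, deriv p x) = p θ - p 0 :=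
        intervalIntegral.integral_deriv_eq_sub (fun x _ => hp1 x) (hdpc.intervalIntegrable _ _)
      have hint : (∫ x in (0:ℝ)..θ, deriv p x) = a * Real.sin θ - b * Real.cos θ + b := by
        rw [intervalIntegral.integral_congr (fun x _ => hab x)]
        have hH : ∀ x ∈ Set.uIcc (0:ℝ) θ,
            HasDerivAt (fun x => a * Real.sin x - b * Real.cos x)
              (a * Real.cos x + b * Real.sin x) x := by
          intro x _
          have := ((Real.hasDerivAt_sin x).const_mul a).fun_sub ((Real.hasDerivAt_cos x).const_mul b)
          refine this.congr_deriv ?_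
          ring
        rw [integral_eq_sub_of_hasDerivAt hH
          (((continuous_const.mul Real.continuous_cos).add (continuous_const.mul Real.continuous_sin)).intervalIntegrable _ _)]
        simp
      rw [hint] at hFTC
      linarith [hFTC]
    · rintro ⟨a₀, a₁, b₁, hab⟩
      have hABeq : A = B := by
        apply hW.2.mpr
        refine ⟨b₁, -a₁, ?_⟩
        intro θ
        have hpeq : p = fun θ => a₀ + a₁ * Real.cos θ + b₁ * Real.sin θ := funext hab
        have hd : HasDerivAt (fun θ => a₀ + a₁ * Real.cos θ + b₁ * Real.sin θ)
            (b₁ * Real.cos θ + -a₁ * Real.sin θ) θ := by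
          have := ((Real.hasDerivAt_cos θ).const_mul a₁).fun_add ((Real.hasDerivAt_sin θ).const_mul b₁)
          have h2 := (this.const_add a₀)
          have hf : (fun θ => a₀ + a₁ * Real.cos θ + b₁ * Real.sin θ)
              = fun x => a₀ + (a₁ * Real.cos x + b₁ * Real.sin x) := by funext x; ring
          rw [hf]; exact h2.congr_deriv (by ring)
        rw [hpeq]
        rw [hd.deriv]
      rw [hABeq]
      ring
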